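/- arXiv:1906.04543 — 7 statements merged into one kernel-verified Lean document; each statement's English description precedes it below -/
import Mathlib

section
/- Let S be an idempotent semifield, A ∈ M_n(S) with det_ε(A) ≠ 0, b a regular vector, and A⁻ = det_ε(A)⁻¹ adj_ε(A). If (AA⁻)_{ij} ⊗ b_j ≤ b_i for all i, j, then X* = A⁻b is a solution of AX = b. -/
/-- An `ε`-function on a semiring `S`. -/
def IsEpsFn {S : Type*} [Semiring S] (ε : S → S) : Prop :=
  Function.Bijective ε ∧ (∀ a : S, ε (ε a) = a) ∧ (∀ a b : S, ε (a + b) = ε a + ε b) ∧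
    (∀ a b : S, ε (a * b) = ε a * b) ∧ (∀ a b : S, ε (a * b) = a * ε b)

/-- The `ε`-determinant: `det_ε A = ⊕_σ ε^{τ(σ)}(∏ i, a_{i σ(i)})`, where only the
parity of the number of inversions `τ(σ)` (i.e. the sign of `σ`) matters since
`ε ∘ ε = id`. -/
def epsDet {S : Type*} [CommSemiring S] (ε : S → S) {n : ℕ}
    (A : Matrix (Fin n) (Fin n) S) : S :=
  ∑ σ : Equiv.Perm (Fin n),
    if Equiv.Perm.sign σ = 1 then ∏ i, A i (σ i) else ε (∏ i, A i (σ i))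

/-- The `ε`-adjoint matrix: `adj_ε(A)_{ij} = ε^{(i+j)} det_ε (A(j|i))`
(for 1-based `i, j`, whose parity agrees with that of `i.val + j.val`). -/
def epsAdj {S : Type*} [CommSemiring S] (ε : S → S) {n : ℕ}
    (A : Matrix (Fin (n + 1)) (Fin (n + 1)) S) : Matrix (Fin (n + 1)) (Fin (n + 1)) S :=
  fun i j =>
    if (i.val + j.val) % 2 = 0 then epsDet ε (A.submatrix j.succAbove i.succAbove)
    else ε (epsDet ε (A.submatrix j.succAbove i.succAbove))

/-- The pseudo-inverse `A⁻ = det_ε(A)⁻¹ • adj_ε(A)` over a semifield. -/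
noncomputable def pseudoInv {S : Type*} [Semifield S] (ε : S → S) {n : ℕ}
    (A : Matrix (Fin (n + 1)) (Fin (n + 1)) S) : Matrix (Fin (n + 1)) (Fin (n + 1)) S :=
  (epsDet ε A)⁻¹ • epsAdj ε A

/-! Write `a ≤ b` for `a + b = b`. In an additively idempotent semifield every `ε`-function is
the identity: `ε 1 * ε 1 = 1`, and `x * x = 1` forces `x = 1` since `x * (x + 1) = x + 1 ≠ 0`.
So `det_ε` is the permanent, and each term of `per A` is dominated by a term of the expansion of
`per A` along row `i`, which gives `1 ≤ (A A⁻)ᵢᵢ`. Hence `bᵢ ≤ (A A⁻)ᵢᵢ bᵢ ≤ (A A⁻ b)ᵢ`, while the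
hypothesis gives `(A A⁻ b)ᵢ ≤ bᵢ`. -/

section IdempotentSum

variable {S : Type*} [AddCommMonoid S] {ι : Type*} [Fintype ι]

theorem add_sum_eq_sum_of_idem (hid : ∀ a : S, a + a = a) (f : ι → S) (a : ι) :
    f a + ∑ x, f x = ∑ x, f x := by
  classical
  rw [← Finset.add_sum_erase _ f (Finset.mem_univ a), ← add_assoc, hid]

theorem sum_add_eq_of_forall_add_eq {f : ι → S} {c : S}
    (h : ∀ x, f x + c = c) : (∑ x, f x) + c = c := by
  classical
  induction (Finset.univ : Finset ι) using Finset.induction with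
  | empty => simp
  | insert x s hx ih => rw [Finset.sum_insert hx, add_assoc, ih, h]

end IdempotentSum

theorem eq_one_of_mul_self_eq_one_of_idem {S : Type*} [Semifield S] (hid : ∀ a : S, a + a = a)
    {x : S} (hx : x * x = 1) : x = 1 := by
  have hx1 : x + 1 ≠ 0 := fun h => one_ne_zero <|
    calc (1 : S) = 1 + (x + 1) := by rw [h, add_zero]
      _ = x + 1 := by rw [add_left_comm, hid]
      _ = 0 := h
  refine mul_right_cancel₀ hx1 ?_
  rw [mul_add, hx, mul_one, one_mul, add_comm]

theorem IsEpsFn.apply_eq_self_of_idem {S : Type*} [Semifield S] (hid : ∀ a : S, a + a = a)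
    {ε : S → S} (hε : IsEpsFn ε) (a : S) : ε a = a := by
  obtain ⟨-, hεε, -, hmul, -⟩ := hε
  have h1 : ε 1 = 1 := eq_one_of_mul_self_eq_one_of_idem hid <| by
    rw [← hmul, one_mul, hεε]
  rw [← one_mul a, hmul, h1]

theorem Equiv.Perm.exists_succAbove_apply_eq {n : ℕ} (σ : Equiv.Perm (Fin (n + 1)))
    (j : Fin (n + 1)) :
    ∃ τ : Equiv.Perm (Fin n), ∀ p, (σ j).succAbove (τ p) = σ (j.succAbove p) :=
  have hne : ∀ x, x ≠ j ↔ σ x ≠ σ j := fun _ => σ.injective.ne_iff.symm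
  ⟨(finSuccAboveEquiv j).trans ((σ.subtypeEquiv hne).trans (finSuccAboveEquiv (σ j)).symm),
    fun _ => congrArg Subtype.val ((finSuccAboveEquiv (σ j)).apply_symm_apply _)⟩

namespace Matrix

theorem mulVec_eq_self_of_idem {S : Type*} [Semiring S] (hid : ∀ a : S, a + a = a)
    {m : Type*} [Fintype m] {P : Matrix m m S} {b : m → S} (hdiag : ∀ i, 1 + P i i = P i i)
    (hle : ∀ i j, P i j * b j + b i = b i) : P *ᵥ b = b := by
  funext i
  have hterm := add_sum_eq_sum_of_idem hid (fun j => P i j * b j) i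
  have hupper : (∑ j, P i j * b j) + b i = b i := sum_add_eq_of_forall_add_eq (hle i)
  have hlower : b i + ∑ j, P i j * b j = ∑ j, P i j * b j :=
    calc b i + ∑ j, P i j * b j = b i + (P i i * b i + ∑ j, P i j * b j) := by rw [hterm]
      _ = (1 + P i i) * b i + ∑ j, P i j * b j := by rw [add_mul, one_mul, add_assoc]
      _ = ∑ j, P i j * b j := by rw [hdiag, hterm]
  change ∑ j, P i j * b j = b i
  rw [← hlower, add_comm, hupper]

section CommSemiring

variable {S : Type*} [CommSemiring S]

theorem epsDet_eq_permanent {ε : S → S} (hε : ∀ a, ε a = a) {n : ℕ}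
    (B : Matrix (Fin n) (Fin n) S) : epsDet ε B = B.permanent := by
  rw [← permanent_transpose, epsDet, permanent]
  refine Finset.sum_congr rfl fun σ _ => ?_
  rw [hε, ite_self]
  rfl

theorem epsAdj_eq_permanent {ε : S → S} (hε : ∀ a, ε a = a) {n : ℕ}
    (A : Matrix (Fin (n + 1)) (Fin (n + 1)) S) (i j : Fin (n + 1)) :
    epsAdj ε A i j = (A.submatrix j.succAbove i.succAbove).permanent := by
  rw [epsAdj, hε, ite_self, epsDet_eq_permanent hε]

theorem permanent_add_sum_mul_permanent_submatrix (hid : ∀ a : S, a + a = a) {n : ℕ}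
    (M : Matrix (Fin (n + 1)) (Fin (n + 1)) S) (j : Fin (n + 1)) :
    M.permanent + ∑ k, M k j * (M.submatrix k.succAbove j.succAbove).permanent =
      ∑ k, M k j * (M.submatrix k.succAbove j.succAbove).permanent := by
  set minor := fun k : Fin (n + 1) => M.submatrix k.succAbove j.succAbove
  refine sum_add_eq_of_forall_add_eq fun σ => ?_
  obtain ⟨τ, hτ⟩ := σ.exists_succAbove_apply_eq j
  have hterm : ∏ i, M (σ i) i = M (σ j) j * ∏ p, minor (σ j) (τ p) p := by
    rw [Fin.prod_univ_succAbove _ j]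
    simp only [minor, submatrix_apply, hτ]
  have hτ_le : (∏ p, minor (σ j) (τ p) p) + (minor (σ j)).permanent = (minor (σ j)).permanent :=
    add_sum_eq_sum_of_idem hid (fun τ => ∏ p, minor (σ j) (τ p) p) τ
  have hk_le := add_sum_eq_sum_of_idem hid (fun k => M k j * (minor k).permanent) (σ j)
  calc ∏ i, M (σ i) i + ∑ k, M k j * (minor k).permanent
      = M (σ j) j * ∏ p, minor (σ j) (τ p) p +
          (M (σ j) j * (minor (σ j)).permanent + ∑ k, M k j * (minor k).permanent) := by
        rw [hterm, hk_le]
    _ = M (σ j) j * ((∏ p, minor (σ j) (τ p) p) + (minor (σ j)).permanent) +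
          ∑ k, M k j * (minor k).permanent := by
        rw [mul_add, add_assoc]
    _ = ∑ k, M k j * (minor k).permanent := by rw [hτ_le, hk_le]

end CommSemiring

theorem one_add_mul_pseudoInv_apply_self {S : Type*} [Semifield S]
    (hid : ∀ a : S, a + a = a) {ε : S → S} (hε : IsEpsFn ε) {n : ℕ}
    {A : Matrix (Fin (n + 1)) (Fin (n + 1)) S} (hdet : epsDet ε A ≠ 0) (i : Fin (n + 1)) :
    1 + (A * pseudoInv ε A) i i = (A * pseudoInv ε A) i i := by
  have hε_id := hε.apply_eq_self_of_idem hid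
  have hrow : (A * pseudoInv ε A) i i =
      (epsDet ε A)⁻¹ * ∑ k, A i k * (A.submatrix i.succAbove k.succAbove).permanent := by
    simp only [mul_apply, pseudoInv, smul_apply, smul_eq_mul,
      epsAdj_eq_permanent hε_id, Finset.mul_sum, mul_left_comm]
  have hexpand := permanent_add_sum_mul_permanent_submatrix hid A.transpose i
  simp only [transpose_apply, ← transpose_submatrix, permanent_transpose] at hexpand
  rw [hrow, ← inv_mul_cancel₀ hdet, epsDet_eq_permanent hε_id, ← mul_add, hexpand]

end Matrix

theorem stmt_9_general {S : Type*} [Semifield S] (hid : ∀ a : S, a + a = a)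
    {n : ℕ} (ε : S → S) (hε : IsEpsFn ε)
    (A : Matrix (Fin (n + 1)) (Fin (n + 1)) S) (hdet : epsDet ε A ≠ 0)
    (b : Fin (n + 1) → S)
    (hcond : ∀ i j, (A * pseudoInv ε A) i j * b j + b i = b i) :
    A.mulVec ((pseudoInv ε A).mulVec b) = b := by
  rw [Matrix.mulVec_mulVec]
  exact Matrix.mulVec_eq_self_of_idem hid (Matrix.one_add_mul_pseudoInv_apply_self hid hε hdet)
    hcond

/-- Over an idempotent semifield (additively idempotent, totally ordered by
`a ≤ b ↔ a + b = b`), if `(AA⁻)_{ij} ⊗ b_j ≤ b_i` for all `i, j`, then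
`X* = A⁻ b` is a solution of `A X = b`. -/
theorem stmt_9 {S : Type*} [Semifield S] (hid : ∀ a : S, a + a = a)
    (htot : ∀ a b : S, a + b = b ∨ b + a = a) {n : ℕ} (ε : S → S) (hε : IsEpsFn ε)
    (A : Matrix (Fin (n + 1)) (Fin (n + 1)) S) (hdet : epsDet ε A ≠ 0)
    (b : Fin (n + 1) → S) (hb : ∀ i, b i ≠ 0)
    (hcond : ∀ i j, (A * pseudoInv ε A) i j * b j + b i = b i) :
    A.mulVec ((pseudoInv ε A).mulVec b) = b :=
  stmt_9_general hid ε hε A hdet b hcond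
end

section
/- Let S be an idempotent semifield, A ∈ M_n(S) with det_ε(A) ≠ 0, and b a regular n-vector. If (AA⁻)_{ij} ⊗ b_j ≤ b_i for all i, j, then X* = A⁻b is the maximal solution of AX = b: for every solution Y of AY = b, Y ≤ X* componentwise. -/
/-!
In an additively idempotent semifield an `ε`-function is the identity: `ε a = a * ε 1` and
`ε 1 * ε 1 = 1`, while `u = 1 + ε 1` satisfies `u * u = u`, so `u = 1` and `ε 1 = ε 1 * u = 1`.
Hence `det_ε` is the permanent and `adj_ε` the permanental adjugate, and Laplace expansion of
the permanent makes the diagonals of `A * A⁻` and `A⁻ * A` equal to `1`. Since `+` is a join,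
`(A * A⁻ * b) i` is a join of terms bounded by `b i` (by hypothesis) containing `b i` itself, so
it equals `b i`. If `A * Y = b` then `A⁻ * b = (A⁻ * A) * Y`, whose `k`-th entry is a join
containing `Y k`.
-/

open Matrix Finset Equiv

theorem eq_one_of_mul_self_eq_one_of_add_self {S : Type*} [Semiring S] [IsDomain S]
    (hid : ∀ a : S, a + a = a) {e : S} (he : e * e = 1) : e = 1 := by
  have hu : (1 + e) * (1 + e) = (1 + e) * 1 := by
    calc (1 + e) * (1 + e) = (1 + 1) + (e + e) := by
          rw [add_mul, one_mul, mul_add, mul_one, he]; abel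
      _ = (1 + e) * 1 := by rw [hid, hid, mul_one]
  have hu0 : (1 : S) + e ≠ 0 := fun h => one_ne_zero <|
    calc (1 : S) = 1 + (1 + e) := by rw [h, add_zero]
      _ = 1 + e := by rw [← add_assoc, hid]
      _ = 0 := h
  have hu1 : 1 + e = 1 := mul_left_cancel₀ hu0 hu
  calc e = e * (1 + e) := by rw [hu1, mul_one]
    _ = e + 1 := by rw [mul_add, mul_one, he]
    _ = 1 := by rw [add_comm, hu1]

theorem IsEpsFn.eq_id {S : Type*} [Semiring S] [IsDomain S] (hid : ∀ a : S, a + a = a)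
    {ε : S → S} (hε : IsEpsFn ε) : ε = id := by
  obtain ⟨-, hεε, -, -, hmul⟩ := hε
  have hε1 : ε 1 = 1 := eq_one_of_mul_self_eq_one_of_add_self hid <| by
    rw [← hmul, mul_one, hεε]
  funext a
  rw [← mul_one a, hmul, hε1, id]

/-- The permutation of `Fin (n + 1)` sending `j` to `i` and `j.succAbove k` to
`i.succAbove (τ k)`. -/
def Equiv.Perm.insertAt {n : ℕ} (j : Fin (n + 1)) (p : Fin (n + 1) × Perm (Fin n)) :
    Perm (Fin (n + 1)) :=
  (finSuccEquiv' j).trans ((Equiv.optionCongr p.2).trans (finSuccEquiv' p.1).symm)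

namespace Equiv.Perm

variable {n : ℕ} (j : Fin (n + 1))

@[simp]
theorem insertAt_apply_self (p : Fin (n + 1) × Perm (Fin n)) : insertAt j p j = p.1 := by
  simp [insertAt]

@[simp]
theorem insertAt_apply_succAbove (p : Fin (n + 1) × Perm (Fin n)) (k : Fin n) :
    insertAt j p (j.succAbove k) = p.1.succAbove (p.2 k) := by
  simp [insertAt]

theorem insertAt_bijective : Function.Bijective (insertAt j) := by
  rw [Fintype.bijective_iff_injective_and_card]
  refine ⟨fun ⟨i, τ⟩ ⟨i', τ'⟩ h => ?_, by simp [Fintype.card_perm, Nat.factorial_succ]⟩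
  have hi : i = i' := by simpa using congr($h j)
  subst hi
  have hτ : τ = τ' := Equiv.ext fun k => by simpa using congr($h (j.succAbove k))
  rw [hτ]

end Equiv.Perm

namespace Matrix

variable {R : Type*} [CommSemiring R] {n : ℕ}

theorem permanent_succ_column (M : Matrix (Fin (n + 1)) (Fin (n + 1)) R) (j : Fin (n + 1)) :
    M.permanent = ∑ i, M i j * (M.submatrix i.succAbove j.succAbove).permanent := by
  rw [permanent, ← Fintype.sum_bijective _ (Perm.insertAt_bijective j) _ _ fun _ => rfl,
    Fintype.sum_prod_type]
  refine sum_congr rfl fun i _ => ?_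
  rw [permanent, mul_sum]
  refine sum_congr rfl fun τ _ => ?_
  rw [Fin.prod_univ_succAbove _ j]
  simp

theorem permanent_succ_row (M : Matrix (Fin (n + 1)) (Fin (n + 1)) R) (i : Fin (n + 1)) :
    M.permanent = ∑ j, M i j * (M.submatrix i.succAbove j.succAbove).permanent := by
  rw [← permanent_transpose, permanent_succ_column _ i]
  simp_rw [transpose_apply, ← transpose_submatrix, permanent_transpose]

end Matrix

section Idempotent

variable {M : Type*} [AddCommMonoid M] {ι : Type*} {s : Finset ι} {f : ι → M}

theorem sum_add_eq_of_forall_add_eq_s11 {c : M} (h : ∀ j ∈ s, f j + c = c) :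
    ∑ j ∈ s, f j + c = c := by
  classical
  induction s using Finset.induction_on with
  | empty => simp
  | insert a s ha ih =>
    rw [sum_insert ha, add_assoc, ih fun j hj => h j (mem_insert_of_mem hj),
      h a (mem_insert_self a s)]

variable (hid : ∀ a : M, a + a = a)
include hid

theorem add_sum_eq_sum_of_mem {i : ι} (hi : i ∈ s) : f i + ∑ j ∈ s, f j = ∑ j ∈ s, f j := by
  classical
  rw [← add_sum_erase s f hi, ← add_assoc, hid]

theorem sum_eq_of_mem_of_forall_add_eq {i : ι} {c : M} (hi : i ∈ s) (hfi : f i = c)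
    (h : ∀ j ∈ s, f j + c = c) : ∑ j ∈ s, f j = c := by
  rw [← sum_add_eq_of_forall_add_eq_s11 h, ← hfi, add_comm, add_sum_eq_sum_of_mem hid hi]

end Idempotent

section EpsId

variable {S : Type*} {n : ℕ}

theorem epsDet_id [CommSemiring S] (A : Matrix (Fin n) (Fin n) S) :
    epsDet id A = A.permanent := by
  rw [← permanent_transpose]
  exact sum_congr rfl fun σ _ => by simp

theorem epsAdj_id_apply [CommSemiring S] (A : Matrix (Fin (n + 1)) (Fin (n + 1)) S)
    (i j : Fin (n + 1)) :
    epsAdj id A i j = (A.submatrix j.succAbove i.succAbove).permanent := by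
  simp [epsAdj, epsDet_id]

theorem mul_epsAdj_id_apply_self [CommSemiring S] (A : Matrix (Fin (n + 1)) (Fin (n + 1)) S)
    (i : Fin (n + 1)) : (A * epsAdj id A) i i = A.permanent := by
  simp only [mul_apply, epsAdj_id_apply, ← permanent_succ_row]

theorem epsAdj_id_mul_apply_self [CommSemiring S] (A : Matrix (Fin (n + 1)) (Fin (n + 1)) S)
    (j : Fin (n + 1)) : (epsAdj id A * A) j j = A.permanent := by
  simp only [mul_apply, epsAdj_id_apply, mul_comm _ (A _ j), ← permanent_succ_column]

variable [Semifield S] {A : Matrix (Fin (n + 1)) (Fin (n + 1)) S}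

theorem mul_pseudoInv_id_apply_self (hA : A.permanent ≠ 0) (i : Fin (n + 1)) :
    (A * pseudoInv id A) i i = 1 := by
  rw [pseudoInv, Matrix.mul_smul, Matrix.smul_apply, mul_epsAdj_id_apply_self, epsDet_id,
    smul_eq_mul, inv_mul_cancel₀ hA]

theorem pseudoInv_id_mul_apply_self (hA : A.permanent ≠ 0) (j : Fin (n + 1)) :
    (pseudoInv id A * A) j j = 1 := by
  rw [pseudoInv, Matrix.smul_mul, Matrix.smul_apply, epsAdj_id_mul_apply_self, epsDet_id,
    smul_eq_mul, inv_mul_cancel₀ hA]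

end EpsId

theorem stmt_11_general {S : Type*} [Semifield S] (hid : ∀ a : S, a + a = a)
    {n : ℕ} (ε : S → S) (hε : IsEpsFn ε)
    (A : Matrix (Fin (n + 1)) (Fin (n + 1)) S) (hdet : epsDet ε A ≠ 0)
    (b : Fin (n + 1) → S)
    (hcond : ∀ i j, (A * pseudoInv ε A) i j * b j + b i = b i) :
    A.mulVec ((pseudoInv ε A).mulVec b) = b ∧
      ∀ Y : Fin (n + 1) → S, A.mulVec Y = b →
        ∀ k, Y k + (pseudoInv ε A).mulVec b k = (pseudoInv ε A).mulVec b k := by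
  obtain rfl : ε = id := hε.eq_id hid
  rw [epsDet_id] at hdet
  refine ⟨funext fun i => ?_, fun Y hY k => ?_⟩
  · rw [mulVec_mulVec]
    refine sum_eq_of_mem_of_forall_add_eq hid (mem_univ i) ?_ fun j _ => hcond i j
    simp [mul_pseudoInv_id_apply_self hdet]
  · rw [← hY, mulVec_mulVec]
    simpa [mulVec, dotProduct, pseudoInv_id_mul_apply_self hdet] using
      add_sum_eq_sum_of_mem hid (f := fun l => (pseudoInv id A * A) k l * Y l) (mem_univ k)

/-- If `(AA⁻)_{ij} ⊗ b_j ≤ b_i` for all `i, j`, then `X* = A⁻ b` is the maximal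
solution of `A X = b`: every solution `Y` satisfies `Y ≤ X*` componentwise. -/
theorem stmt_11 {S : Type*} [Semifield S] (hid : ∀ a : S, a + a = a)
    (htot : ∀ a b : S, a + b = b ∨ b + a = a) {n : ℕ} (ε : S → S) (hε : IsEpsFn ε)
    (A : Matrix (Fin (n + 1)) (Fin (n + 1)) S) (hdet : epsDet ε A ≠ 0)
    (b : Fin (n + 1) → S) (hb : ∀ i, b i ≠ 0)
    (hcond : ∀ i j, (A * pseudoInv ε A) i j * b j + b i = b i) :
    A.mulVec ((pseudoInv ε A).mulVec b) = b ∧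
      ∀ Y : Fin (n + 1) → S, A.mulVec Y = b →
        ∀ k, Y k + (pseudoInv ε A).mulVec b k = (pseudoInv ε A).mulVec b k :=
  stmt_11_general hid ε hε A hdet b hcond
end

section
/- Let S be an idempotent semifield, A ∈ M_{m×n}(S) with all entries nonzero, b a regular m-vector, and Q the associated normalized matrix with q_{ij} = b̃_i ⊗ ã_{ij}⁻¹. If the system AX = b has a solution, then every row of Q contains at least one column minimum element, i.e., for each i there exists j with q_{ij} = min_k q_{kj} (minimum with respect to the total order ≤ on S). -/
private lemma sum_eq_term {S : Type*} [Semifield S]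
    (htot : ∀ a b : S, a + b = b ∨ b + a = a) {ι : Type*} (s : Finset ι)
    (f : ι → S) (hs : s.Nonempty) : ∃ j ∈ s, ∑ x ∈ s, f x = f j := by
  classical
  induction hs using Finset.Nonempty.cons_induction with
  | singleton a => exact ⟨a, by simp⟩
  | cons a s ha hs' ih =>
      obtain ⟨j, hj, hsum⟩ := ih
      rw [Finset.sum_cons, hsum]
      rcases htot (f a) (f j) with h | h
      · exact ⟨j, Finset.mem_cons_of_mem hj, h⟩
      · exact ⟨a, Finset.mem_cons_self a s, by rwa [add_comm]⟩

private lemma term_le_sum {S : Type*} [Semifield S] (hid : ∀ a : S, a + a = a)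
    {ι : Type*} [DecidableEq ι] (s : Finset ι) (f : ι → S) {k : ι} (hk : k ∈ s) :
    f k + ∑ x ∈ s, f x = ∑ x ∈ s, f x := by
  rw [← Finset.add_sum_erase s f hk, ← add_assoc, hid]

/-- If the system `A X = b` over an idempotent semifield (order `a ≤ b ↔ a + b = b`)
has a solution, then every row of the associated normalized matrix
`Q` (equivalently, up to column scaling, `q_{ij} = b_i ⊗ a_{ij}⁻¹`) contains at
least one column minimum element. -/
theorem stmt_14 {S : Type*} [Semifield S] (hid : ∀ a : S, a + a = a)
    (htot : ∀ a b : S, a + b = b ∨ b + a = a) {m n : ℕ}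
    (A : Matrix (Fin m) (Fin n) S) (hA : ∀ i j, A i j ≠ 0)
    (b : Fin m → S) (hb : ∀ i, b i ≠ 0)
    (Q : Matrix (Fin m) (Fin n) S) (hQ : ∀ i j, Q i j = b i * (A i j)⁻¹)
    (hsol : ∃ X : Fin n → S, A.mulVec X = b) :
    ∀ i, ∃ j, ∀ k, Q i j + Q k j = Q k j := by
  obtain ⟨X, hX⟩ := hsol
  intro i
  have hbi : ∑ j, A i j * X j = b i := by
    have := congrFun hX i
    simpa [Matrix.mulVec, dotProduct] using this
  have hn : (Finset.univ : Finset (Fin n)).Nonempty := by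
    rcases (Finset.univ : Finset (Fin n)).eq_empty_or_nonempty with h | h
    · exfalso; apply hb i; rw [← hbi, h, Finset.sum_empty]
    · exact h
  obtain ⟨j, _, hj⟩ := sum_eq_term htot Finset.univ (fun j => A i j * X j) hn
  rw [hbi] at hj
  refine ⟨j, fun k => ?_⟩
  have hbk : ∑ l, A k l * X l = b k := by
    have := congrFun hX k
    simpa [Matrix.mulVec, dotProduct] using this
  have hle : A k j * X j + b k = b k := by
    rw [← hbk]; exact term_le_sum hid Finset.univ (fun l => A k l * X l) (Finset.mem_univ j)
  have hQij : Q i j = X j := by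
    rw [hQ, hj, mul_comm (A i j), mul_assoc, mul_inv_cancel₀ (hA i j), mul_one]
  rw [hQij, hQ]
  have h2 := congrArg (fun t => t * (A k j)⁻¹) hle
  simp only [add_mul] at h2
  rw [mul_comm (A k j) (X j), mul_assoc, mul_inv_cancel₀ (hA k j), mul_one] at h2
  exact h2
end

section
/- Let S be an idempotent semifield, A ∈ M_{m×n}(S) with all entries nonzero, b a regular m-vector, and Q' the matrix with entries q'_{ij} = b_i ⊗ a_{ij}⁻¹. If every row of Q' contains a column minimum element, then setting x_j = min_i q'_{ij} gives a solution of AX = b, and moreover this solution is maximal: every solution Y of AY = b satisfies Y ≤ X componentwise. -/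
/-!
Write `a ≤ b` for `a + b = b`. In an idempotent semifield `A x ≤ b` holds exactly when
`x j ≤ b i * (A i j)⁻¹` for all `i, j`, i.e. when `x ≤ Q` columnwise. Hence `X`, the column
minima of `Q`, satisfies `A X ≤ b`, and every solution `Y` of `A Y = b` lies below `X`.
Equality `A X = b` comes from the column minimum in row `i`: there `X j = Q i j`, so the
term `A i j * X j` of `(A X) i` already equals `b i`.
-/

open Finset Matrix

section IdempotentAddition

variable {ι M : Type*} [AddCommMonoid M]

theorem add_sum_eq_sum_of_add_self (hid : ∀ a : M, a + a = a) {s : Finset ι} (f : ι → M)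
    {i : ι} (hi : i ∈ s) : f i + ∑ j ∈ s, f j = ∑ j ∈ s, f j := by
  classical
  rw [← add_sum_erase s f hi, ← add_assoc, hid]

theorem sum_add_eq_iff_of_add_self (hid : ∀ a : M, a + a = a) {s : Finset ι} {f : ι → M}
    {c : M} : (∑ i ∈ s, f i) + c = c ↔ ∀ i ∈ s, f i + c = c := by
  refine ⟨fun h i hi => ?_, fun h => ?_⟩
  · rw [← h, ← add_assoc, add_sum_eq_sum_of_add_self hid f hi]
  · refine sum_induction f (· + c = c) (fun x y hx hy => ?_) (zero_add c) h
    rw [add_assoc, hy, hx]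

end IdempotentAddition

theorem mul_add_eq_iff_add_mul_inv_eq {K : Type*} [Semifield K] {a y c : K} (ha : a ≠ 0) :
    a * y + c = c ↔ y + c * a⁻¹ = c * a⁻¹ := by
  have hc : a * (c * a⁻¹) = c := by field_simp
  rw [← mul_right_inj' ha (b := y + c * a⁻¹), mul_add, hc]

theorem Matrix.mulVec_add_eq_iff_of_add_self {K : Type*} [Semifield K]
    (hid : ∀ a : K, a + a = a) {m n : Type*} [Fintype n] {A : Matrix m n K}
    (hA : ∀ i j, A i j ≠ 0) {x : n → K} {b : m → K} :
    (∀ i, (A *ᵥ x) i + b i = b i) ↔ ∀ i j, x j + b i * (A i j)⁻¹ = b i * (A i j)⁻¹ := by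
  refine forall_congr' fun i => ?_
  simp only [mulVec, dotProduct, sum_add_eq_iff_of_add_self hid, mem_univ, true_implies,
    mul_add_eq_iff_add_mul_inv_eq (hA i _)]

theorem stmt_15_general {S : Type*} [Semifield S] (hid : ∀ a : S, a + a = a)
    {m n : ℕ}
    (A : Matrix (Fin m) (Fin n) S) (hA : ∀ i j, A i j ≠ 0)
    (b : Fin m → S)
    (Q : Matrix (Fin m) (Fin n) S) (hQ : ∀ i j, Q i j = b i * (A i j)⁻¹)
    (hrow : ∀ i, ∃ j, ∀ k, Q i j + Q k j = Q k j)
    (X : Fin n → S)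
    (hX : ∀ j, (∀ i, X j + Q i j = Q i j) ∧ ∃ i, X j = Q i j) :
    A.mulVec X = b ∧ ∀ Y : Fin n → S, A.mulVec Y = b → ∀ j, Y j + X j = X j := by
  simp only [hQ] at hrow hX
  have hAX : ∀ i, (A *ᵥ X) i + b i = b i :=
    (Matrix.mulVec_add_eq_iff_of_add_self hid hA).2 fun i j => (hX j).1 i
  refine ⟨funext fun i => ?_, fun Y hY j => ?_⟩
  · obtain ⟨j, hj⟩ := hrow i
    obtain ⟨i', hi'⟩ := (hX j).2
    have hXj : X j = b i * (A i j)⁻¹ := by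
      rw [← (hX j).1 i, add_comm, hi', hj i']
    have hbAX : b i + (A *ᵥ X) i = (A *ᵥ X) i := by
      have hterm : A i j * X j = b i := by rw [hXj]; field_simp [hA i j]
      rw [← hterm]
      exact add_sum_eq_sum_of_add_self hid (fun k => A i k * X k) (mem_univ j)
    rw [← hbAX, add_comm, hAX i]
  · obtain ⟨i, hi⟩ := (hX j).2
    have hAY : ∀ i, (A *ᵥ Y) i + b i = b i := by simp only [hY, hid, implies_true]
    rw [hi]
    exact (Matrix.mulVec_add_eq_iff_of_add_self hid hA).1 hAY i j

/-- If every row of `Q'` (with `q'_{ij} = b_i ⊗ a_{ij}⁻¹`) contains a column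
minimum element, then `x_j = min_i q'_{ij}` solves `A X = b` and is the maximal
solution: every solution `Y` satisfies `Y ≤ X` componentwise. -/
theorem stmt_15 {S : Type*} [Semifield S] (hid : ∀ a : S, a + a = a)
    (htot : ∀ a b : S, a + b = b ∨ b + a = a) {m n : ℕ}
    (A : Matrix (Fin m) (Fin n) S) (hA : ∀ i j, A i j ≠ 0)
    (b : Fin m → S) (hb : ∀ i, b i ≠ 0)
    (Q : Matrix (Fin m) (Fin n) S) (hQ : ∀ i j, Q i j = b i * (A i j)⁻¹)
    (hrow : ∀ i, ∃ j, ∀ k, Q i j + Q k j = Q k j)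
    (X : Fin n → S)
    (hX : ∀ j, (∀ i, X j + Q i j = Q i j) ∧ ∃ i, X j = Q i j) :
    A.mulVec X = b ∧ ∀ Y : Fin n → S, A.mulVec Y = b → ∀ j, Y j + X j = X j :=
  stmt_15_general hid A hA b Q hQ hrow X hX
end

section
/- Let S be an idempotent semifield, A ∈ M_{m×n}(S) with all entries nonzero, and b a regular m-vector. The system AX = b has a solution if and only if A X̄ = b where x̄_j = min_i (b_i ⊗ a_{ij}⁻¹); equivalently, iff every row of the matrix (b_i ⊗ a_{ij}⁻¹) contains a column minimum element. -/
section Aux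

variable {S : Type*} [Semifield S]

private lemma aux_le_trans (a b c : S) (h1 : a + b = b) (h2 : b + c = c) :
    a + c = c := by
  conv_lhs => rw [← h2, ← add_assoc, h1]
  exact h2

private lemma aux_mono (c a b : S) (h : a + b = b) : c * a + c * b = c * b := by
  rw [← mul_add, h]

private lemma aux_antisymm (a b : S) (h1 : a + b = b) (h2 : b + a = a) : a = b := by
  rw [← h2, add_comm, h1]

private lemma aux_sum_le {ι : Type*} (s : Finset ι) (f : ι → S) (c : S)
    (h : ∀ j ∈ s, f j + c = c) : s.sum f + c = c := by
  induction s using Finset.cons_induction with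
  | empty => simp
  | cons a s ha ih =>
    rw [Finset.sum_cons, add_assoc,
      ih (fun j hj => h j (Finset.mem_cons_of_mem hj)),
      h a (Finset.mem_cons_self a s)]

private lemma aux_term_le_sum (hid : ∀ a : S, a + a = a) {ι : Type*} [DecidableEq ι]
    (s : Finset ι) (f : ι → S) (j : ι) (hj : j ∈ s) : f j + s.sum f = s.sum f := by
  rw [← Finset.add_sum_erase s f hj, ← add_assoc, hid]

private lemma aux_attain (htot : ∀ a b : S, a + b = b ∨ b + a = a)
    {ι : Type*} (s : Finset ι) (f : ι → S) :
    s.sum f = 0 ∨ ∃ j ∈ s, s.sum f = f j := by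
  induction s using Finset.cons_induction with
  | empty => left; simp
  | cons a s ha ih =>
    right
    rw [Finset.sum_cons]
    rcases ih with h0 | ⟨j, hj, hsum⟩
    · exact ⟨a, Finset.mem_cons_self a s, by rw [h0, add_zero]⟩
    · rw [hsum]
      rcases htot (f a) (f j) with h | h
      · exact ⟨j, Finset.mem_cons_of_mem hj, h⟩
      · exact ⟨a, Finset.mem_cons_self a s, by rw [add_comm]; exact h⟩

end Aux

/-- The system `A X = b` over an idempotent semifield has a solution iff the
candidate `X̄` with `x̄_j = min_i (b_i ⊗ a_{ij}⁻¹)` is a solution; equivalently,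
iff every row of the matrix `(b_i ⊗ a_{ij}⁻¹)` contains a column minimum
element. -/
theorem stmt_16 {S : Type*} [Semifield S] (hid : ∀ a : S, a + a = a)
    (htot : ∀ a b : S, a + b = b ∨ b + a = a) {m n : ℕ}
    (A : Matrix (Fin m) (Fin n) S) (hA : ∀ i j, A i j ≠ 0)
    (b : Fin m → S) (hb : ∀ i, b i ≠ 0)
    (Q : Matrix (Fin m) (Fin n) S) (hQ : ∀ i j, Q i j = b i * (A i j)⁻¹)
    (Xbar : Fin n → S)
    (hXbar : ∀ j, (∀ i, Xbar j + Q i j = Q i j) ∧ ∃ i, Xbar j = Q i j) :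
    ((∃ X : Fin n → S, A.mulVec X = b) ↔ A.mulVec Xbar = b) ∧
      ((∃ X : Fin n → S, A.mulVec X = b) ↔ ∀ i, ∃ j, ∀ k, Q i j + Q k j = Q k j) := by
  have hAQ : ∀ i j, A i j * Q i j = b i := by
    intro i j
    rw [hQ, mul_comm (b i), ← mul_assoc, mul_inv_cancel₀ (hA i j), one_mul]
  have hmv : ∀ (X : Fin n → S) (i : Fin m),
      A.mulVec X i = ∑ j, A i j * X j := fun X i => rfl
  -- X̄ is always a subsolution : A.mulVec Xbar ≤ b
  have hC1 : ∀ i, A.mulVec Xbar i + b i = b i := by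
    intro i
    rw [hmv]
    refine aux_sum_le _ _ _ (fun j _ => ?_)
    rw [← hAQ i j]
    exact aux_mono _ _ _ ((hXbar j).1 i)
  -- any solution is dominated by X̄
  have hforward : (∃ X : Fin n → S, A.mulVec X = b) → A.mulVec Xbar = b := by
    rintro ⟨X, hX⟩
    have hXle : ∀ j, X j + Xbar j = Xbar j := by
      intro j
      have h1 : ∀ i, X j + Q i j = Q i j := by
        intro i
        have hterm : A i j * X j + b i = b i := by
          have hbi : A.mulVec X i = b i := congrFun hX i
          rw [← hbi, hmv]
          exact aux_term_le_sum hid Finset.univ (fun k => A i k * X k) j (Finset.mem_univ j)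
        have h2 := aux_mono (A i j)⁻¹ _ _ hterm
        rwa [← mul_assoc, inv_mul_cancel₀ (hA i j), one_mul, mul_comm, ← hQ] at h2
      obtain ⟨i0, hi0⟩ := (hXbar j).2
      rw [hi0]
      exact h1 i0
    funext i
    have h2 : b i + A.mulVec Xbar i = A.mulVec Xbar i := by
      have hbi : A.mulVec X i = b i := congrFun hX i
      rw [← hbi, hmv X, hmv Xbar]
      refine aux_sum_le _ _ _ (fun j _ => ?_)
      exact aux_le_trans _ _ _ (aux_mono (A i j) _ _ (hXle j))
        (aux_term_le_sum hid Finset.univ (fun k => A i k * Xbar k) j (Finset.mem_univ j))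
    exact aux_antisymm _ _ (hC1 i) h2
  have hcond : A.mulVec Xbar = b ↔ ∀ i, ∃ j, ∀ k, Q i j + Q k j = Q k j := by
    constructor
    · intro h i
      have hbi : (∑ j, A i j * Xbar j) = b i := by rw [← hmv, h]
      rcases aux_attain htot Finset.univ (fun j => A i j * Xbar j) with h0 | ⟨j, _, hj⟩
      · exact absurd (hbi ▸ h0) (hb i)
      · have hAX : A i j * Xbar j = b i := by rw [← hj, hbi]
        have hXj : Xbar j = Q i j := by
          have : (A i j)⁻¹ * (A i j * Xbar j) = (A i j)⁻¹ * b i := by rw [hAX]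
          rwa [← mul_assoc, inv_mul_cancel₀ (hA i j), one_mul, mul_comm, ← hQ] at this
        exact ⟨j, fun k => by rw [← hXj]; exact (hXbar j).1 k⟩
    · intro h
      funext i
      obtain ⟨j, hj⟩ := h i
      have hXj : Xbar j = Q i j := by
        refine aux_antisymm _ _ ((hXbar j).1 i) ?_
        obtain ⟨i0, hi0⟩ := (hXbar j).2
        rw [hi0]
        exact hj i0
      have hAX : A i j * Xbar j = b i := by rw [hXj, hAQ]
      have hge : b i + A.mulVec Xbar i = A.mulVec Xbar i := by
        rw [← hAX, hmv]
        exact aux_term_le_sum hid Finset.univ (fun k => A i k * Xbar k) j (Finset.mem_univ j)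
      exact aux_antisymm _ _ (hC1 i) hge
  exact ⟨⟨hforward, fun h => ⟨Xbar, h⟩⟩,
    ⟨fun h => hcond.mp (hforward h), fun h => ⟨Xbar, hcond.mpr h⟩⟩⟩
end

section
/- Let S be an idempotent semifield, A ∈ M_n(S) with all entries nonzero and det_ε(A) ≠ 0, and b a regular vector. If (AA⁻)_{ij} ⊗ b_j ≤ b_i for all i, j, then for each k there exists an index i such that (A⁻b)_k = b_i ⊗ a_{ik}⁻¹; in particular the maximal solutions from the pseudo-inverse method and the normalization method coincide. -/
open Equiv Finset Matrix

section aux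
variable {S : Type*}

/-- The permanent (column convention). -/
def perm' [CommSemiring S] {n : ℕ} (A : Matrix (Fin n) (Fin n) S) : S :=
  ∑ σ : Equiv.Perm (Fin n), ∏ i, A (σ i) i

theorem perm'_eq [CommSemiring S] {n : ℕ} (A : Matrix (Fin n) (Fin n) S) :
    perm' A = ∑ σ : Equiv.Perm (Fin n), ∏ i, A i (σ i) := by
  refine Fintype.sum_equiv (Equiv.inv (Equiv.Perm (Fin n))) _ _ fun σ => ?_
  simp only [Equiv.inv_apply]
  rw [← Equiv.prod_comp σ (fun i => A i (σ⁻¹ i))]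
  simp

theorem epsDet_eq_perm' [CommSemiring S] (ε : S → S) (hεid : ∀ a : S, ε a = a) {n : ℕ}
    (A : Matrix (Fin n) (Fin n) S) : epsDet ε A = perm' A := by
  rw [perm'_eq, epsDet]
  refine Finset.sum_congr rfl fun σ _ => ?_
  rw [hεid]; split <;> rfl

theorem epsAdj_eq_perm' [CommSemiring S] (ε : S → S) (hεid : ∀ a : S, ε a = a) {n : ℕ}
    (A : Matrix (Fin (n+1)) (Fin (n+1)) S) (i j : Fin (n+1)) :
    epsAdj ε A i j = perm' (A.submatrix j.succAbove i.succAbove) := by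
  rw [epsAdj, epsDet_eq_perm' ε hεid]
  split <;> simp [hεid]

theorem perm'_submatrix_id_right [CommSemiring S] {n : ℕ} (A : Matrix (Fin n) (Fin n) S)
    (e : Equiv.Perm (Fin n)) : perm' (A.submatrix id e) = perm' A := by
  unfold perm'
  refine Fintype.sum_equiv (Equiv.mulRight e⁻¹) _ _ fun σ => ?_
  simp only [Matrix.submatrix_apply, id, Equiv.coe_mulRight]
  rw [← Equiv.prod_comp e (fun i => A ((σ * e⁻¹) i) i)]
  simp [Equiv.Perm.mul_apply]

theorem sum_reindex_left [CommSemiring S] {n : ℕ} (f : Fin n → Fin n → S) (e : Equiv.Perm (Fin n)) :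
    ∑ σ : Equiv.Perm (Fin n), ∏ i, f (e (σ i)) i = ∑ σ : Equiv.Perm (Fin n), ∏ i, f (σ i) i :=
  Fintype.sum_equiv (Equiv.mulLeft e) _ _ fun _ => rfl

theorem perm'_succ_column_zero [CommSemiring S] {n : ℕ} (A : Matrix (Fin (n+1)) (Fin (n+1)) S) :
    perm' A = ∑ i : Fin (n+1), A i 0 * perm' (A.submatrix i.succAbove Fin.succ) := by
  rw [perm', Finset.univ_perm_fin_succ, ← Finset.univ_product_univ]
  simp only [Finset.sum_map, Equiv.toEmbedding_apply, Finset.sum_product]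
  refine Finset.sum_congr rfl fun i _ => Fin.cases ?_ (fun i => ?_) i
  · simp only [Fin.prod_univ_succ, Equiv.Perm.decomposeFin_symm_apply_zero,
      Equiv.Perm.decomposeFin_symm_apply_succ, Equiv.swap_self, Equiv.coe_refl, id,
      perm', Finset.mul_sum, submatrix_apply, Fin.succAbove_zero]
  · have key : ∀ σ : Equiv.Perm (Fin n),
        ∏ i', A (Equiv.Perm.decomposeFin.symm (Fin.succ i, σ) i') i' =
        A (Fin.succ i) 0 *
          ∏ i', (A.submatrix (Fin.succ i).succAbove Fin.succ) (i.cycleRange (σ i')) i' := by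
      intro σ
      rw [Fin.prod_univ_succ, Equiv.Perm.decomposeFin_symm_apply_zero]
      congr 1
      refine Finset.prod_congr rfl fun i' _ => ?_
      rw [Equiv.Perm.decomposeFin_symm_apply_succ, submatrix_apply, Fin.succAbove_cycleRange]
    simp_rw [key]
    rw [← Finset.mul_sum,
      sum_reindex_left (fun j i' => (A.submatrix (Fin.succ i).succAbove Fin.succ) j i')
        i.cycleRange]
    rfl

/-- Laplace expansion of the permanent along column `k`. -/
theorem perm'_succ_column [CommSemiring S] {n : ℕ} (A : Matrix (Fin (n+1)) (Fin (n+1)) S)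
    (k : Fin (n+1)) :
    perm' A = ∑ i : Fin (n+1), A i k * perm' (A.submatrix i.succAbove k.succAbove) := by
  set e : Equiv.Perm (Fin (n+1)) := (finSuccEquiv' 0).trans (finSuccEquiv' k).symm with he
  have he0 : e 0 = k := by
    rw [he, Equiv.trans_apply, finSuccEquiv'_at, finSuccEquiv'_symm_none]
  have hes : ∀ j : Fin n, e (Fin.succ j) = k.succAbove j := by
    intro j
    rw [he, Equiv.trans_apply, ← Fin.zero_succAbove, finSuccEquiv'_succAbove,
      finSuccEquiv'_symm_some]
  calc perm' A = perm' (A.submatrix id e) := (perm'_submatrix_id_right A e).symm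
    _ = ∑ i : Fin (n+1), (A.submatrix id e) i 0 *
          perm' ((A.submatrix id e).submatrix i.succAbove Fin.succ) := perm'_succ_column_zero _
    _ = ∑ i : Fin (n+1), A i k * perm' (A.submatrix i.succAbove k.succAbove) := by
        refine Finset.sum_congr rfl fun i _ => ?_
        have h1 : (A.submatrix id ⇑e) i 0 = A i k := by rw [submatrix_apply, id, he0]
        have h2 : (A.submatrix id ⇑e).submatrix i.succAbove Fin.succ =
            A.submatrix i.succAbove k.succAbove := by
          ext i' j'; simp [hes]
        rw [h1, h2]

/- order helpers: `a ≤ b` is encoded as `a + b = b`. -/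

theorem ile_trans [CommSemiring S] {a b c : S} (h1 : a + b = b) (h2 : b + c = c) :
    a + c = c := by rw [← h2, ← add_assoc, h1]

theorem ile_mul_left [CommSemiring S] {a b : S} (c : S) (h : a + b = b) :
    c * a + c * b = c * b := by rw [← mul_add, h]

theorem isum_le [CommSemiring S] {ι : Type*} {s : Finset ι} {f : ι → S} {c : S}
    (h : ∀ j ∈ s, f j + c = c) : (∑ j ∈ s, f j) + c = c := by
  classical
  induction s using Finset.induction_on with
  | empty => simp
  | @insert a s' hx ih =>
    rw [Finset.sum_insert hx, add_assoc, ih fun j hj => h j (Finset.mem_insert_of_mem hj),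
      h a (Finset.mem_insert_self a s')]

theorem ile_sum [CommSemiring S] (hid : ∀ a : S, a + a = a) {ι : Type*} {s : Finset ι}
    {f : ι → S} {j : ι} (hj : j ∈ s) : f j + ∑ i ∈ s, f i = ∑ i ∈ s, f i := by
  classical
  rw [← Finset.add_sum_erase s f hj, ← add_assoc, hid]

theorem iexists_max [CommSemiring S] (hid : ∀ a : S, a + a = a)
    (htot : ∀ a b : S, a + b = b ∨ b + a = a) {ι : Type*} {s : Finset ι} (hs : s.Nonempty)
    (f : ι → S) : ∃ j ∈ s, ∑ i ∈ s, f i = f j := by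
  classical
  have hmax : ∃ j ∈ s, ∀ i ∈ s, f i + f j = f j := by
    induction hs using Finset.Nonempty.cons_induction with
    | singleton a =>
      refine ⟨a, Finset.mem_singleton_self a, fun i hi => ?_⟩
      rw [Finset.mem_singleton] at hi
      rw [hi]; exact hid _
    | cons a s' ha hs' ih =>
      obtain ⟨j, hj, hjmax⟩ := ih
      rcases htot (f a) (f j) with h | h
      · exact ⟨j, Finset.mem_cons_of_mem hj, fun i hi => by
          rcases Finset.mem_cons.mp hi with rfl | hi
          · exact h
          · exact hjmax i hi⟩
      · refine ⟨a, Finset.mem_cons_self a s', fun i hi => ?_⟩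
        rcases Finset.mem_cons.mp hi with rfl | hi
        · exact hid _
        · exact ile_trans (hjmax i hi) h
  obtain ⟨j, hj, hjmax⟩ := hmax
  refine ⟨j, hj, ?_⟩
  have h1 : (∑ i ∈ s, f i) + f j = f j := isum_le hjmax
  have h2 : f j + ∑ i ∈ s, f i = ∑ i ∈ s, f i := ile_sum hid hj
  rw [← h2, add_comm, h1]

/-- In an idempotent semifield, any `ε`-function is the identity. -/
theorem eps_eq_id [Semifield S] (hid : ∀ a : S, a + a = a) {ε : S → S} (hε : IsEpsFn ε) :
    ∀ a : S, ε a = a := by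
  obtain ⟨-, hinv, -, hmul, -⟩ := hε
  have h1 : ∀ a : S, ε a = ε 1 * a := fun a => by
    rw [← one_mul a, hmul, one_mul]
  set e : S := ε 1 with hedef
  have he2 : e * e = 1 := by rw [← h1 (ε 1), hinv]
  have hf : (e + 1) * (e + 1) = e + 1 := by
    rw [mul_add, add_mul, add_mul, he2, mul_one, one_mul, one_mul]
    rw [add_assoc, ← add_assoc e e 1, hid, add_comm 1 (e + 1), add_assoc, hid]
  have hfne : e + 1 ≠ 0 := by
    intro h
    have : e + (1 + 1) = 1 := by rw [← add_assoc, h, zero_add]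
    rw [hid] at this
    rw [this] at h
    exact one_ne_zero h
  have hf1 : e + 1 = 1 := by
    have := mul_left_cancel₀ hfne (hf.trans (mul_one (e + 1)).symm)
    exact this
  have h1e : 1 + e = e := by
    have : e * (e + 1) = e * 1 := by rw [hf1]
    rw [mul_add, he2, mul_one] at this
    exact this
  have he1 : e = 1 := by
    calc e = 1 + e := h1e.symm
      _ = e + 1 := add_comm _ _
      _ = 1 := hf1
  intro a
  rw [h1 a, he1, one_mul]

end aux

/-- Equivalence of the pseudo-inverse and normalization methods: if
`(AA⁻)_{ij} ⊗ b_j ≤ b_i` for all `i, j` (with all entries of `A` nonzero), then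
for each `k`, `(A⁻ b)_k = b_i ⊗ a_{ik}⁻¹` for some `i`; indeed `(A⁻ b)_k` is
exactly `min_i (b_i ⊗ a_{ik}⁻¹)`, the normalization-method solution. -/
theorem stmt_17 {S : Type*} [Semifield S] (hid : ∀ a : S, a + a = a)
    (htot : ∀ a b : S, a + b = b ∨ b + a = a) {n : ℕ} (ε : S → S) (hε : IsEpsFn ε)
    (A : Matrix (Fin (n + 1)) (Fin (n + 1)) S) (hA : ∀ i j, A i j ≠ 0)
    (hdet : epsDet ε A ≠ 0) (b : Fin (n + 1) → S) (hb : ∀ i, b i ≠ 0)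
    (hcond : ∀ i j, (A * pseudoInv ε A) i j * b j + b i = b i) :
    ∀ k, (∀ i, (pseudoInv ε A).mulVec b k + b i * (A i k)⁻¹ = b i * (A i k)⁻¹) ∧
      ∃ i, (pseudoInv ε A).mulVec b k = b i * (A i k)⁻¹ := by
  intro k
  have hεid := eps_eq_id hid hε
  set P := pseudoInv ε A with hP
  have hmv : P.mulVec b k = ∑ j, P k j * b j := by
    simp [Matrix.mulVec, dotProduct]
  -- Part 1 : upper bound
  have part1 : ∀ i, P.mulVec b k + b i * (A i k)⁻¹ = b i * (A i k)⁻¹ := by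
    intro i
    rw [hmv]
    refine isum_le fun j _ => ?_
    -- A i k * P k j ≤ (A * P) i j
    have h1 : A i k * P k j + (A * P) i j = (A * P) i j := by
      rw [Matrix.mul_apply]
      exact ile_sum hid (f := fun l => A i l * P l j) (Finset.mem_univ k)
    -- multiply by b j on the right
    have h2 : A i k * P k j * b j + (A * P) i j * b j = (A * P) i j * b j := by
      rw [mul_comm (A i k * P k j) (b j), mul_comm ((A * P) i j) (b j)]
      exact ile_mul_left _ h1
    have h3 : A i k * P k j * b j + b i = b i := ile_trans h2 (hcond i j)
    have h4 := ile_mul_left ((A i k)⁻¹) h3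
    rw [← mul_assoc, ← mul_assoc, inv_mul_cancel₀ (hA i k), one_mul, mul_comm ((A i k)⁻¹) (b i)]
      at h4
    exact h4
  refine ⟨part1, ?_⟩
  -- Part 2 : attainment
  have hlap : epsDet ε A = ∑ i, A i k * epsAdj ε A k i := by
    rw [epsDet_eq_perm' ε hεid, perm'_succ_column A k]
    exact Finset.sum_congr rfl fun i _ => by rw [epsAdj_eq_perm' ε hεid]
  obtain ⟨i₀, -, hi₀⟩ := iexists_max hid htot (Finset.univ_nonempty)
    (fun i => A i k * epsAdj ε A k i)
  have hd : epsDet ε A = A i₀ k * epsAdj ε A k i₀ := hlap.trans hi₀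
  have hPk : P k i₀ = (A i₀ k)⁻¹ := by
    have hadj : epsAdj ε A k i₀ ≠ 0 := fun h => hdet (by rw [hd, h, mul_zero])
    rw [hP, pseudoInv, Matrix.smul_apply, smul_eq_mul, hd, mul_inv, mul_assoc,
      inv_mul_cancel₀ hadj, mul_one]
  -- P k i₀ * b i₀ ≤ mulVec
  have hge : P k i₀ * b i₀ + P.mulVec b k = P.mulVec b k := by
    rw [hmv]; exact ile_sum hid (f := fun j => P k j * b j) (Finset.mem_univ i₀)
  refine ⟨i₀, ?_⟩
  have hle := part1 i₀
  rw [hPk, mul_comm ((A i₀ k)⁻¹) (b i₀)] at hge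
  calc P.mulVec b k = b i₀ * (A i₀ k)⁻¹ + P.mulVec b k := hge.symm
    _ = P.mulVec b k + b i₀ * (A i₀ k)⁻¹ := add_comm _ _
    _ = b i₀ * (A i₀ k)⁻¹ := hle
end

section
/- Let S be an idempotent semifield, A ∈ M_n(S) with all entries nonzero, and b a regular n-vector. Suppose a_{ik} ⊗ a_{kk}⁻¹ ≤ b_i ⊗ b_k⁻¹ for all 2 ≤ i ≤ n, 1 ≤ k ≤ i−1, and a_{ik} ⊗ a_{kk}⁻¹ ≤ b_i ⊗ b_k⁻¹ for all 1 ≤ i ≤ n−1, k > i. Then for each k, b_k ⊗ a_{kk}⁻¹ = min_i (b_i ⊗ a_{ik}⁻¹), i.e., the k-th column minimum of the matrix (b_i ⊗ a_{ij}⁻¹) is attained at i = k. -/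
theorem add_mul_inv_eq_swap {S : Type*} [Semifield S] {x y u v : S} (hx : x ≠ 0)
    (hv : v ≠ 0) (h : x * y⁻¹ + u * v⁻¹ = u * v⁻¹) :
    v * y⁻¹ + u * x⁻¹ = u * x⁻¹ :=
  calc v * y⁻¹ + u * x⁻¹ = (x * y⁻¹ + u * v⁻¹) * (v * x⁻¹) := by field_simp
    _ = u * v⁻¹ * (v * x⁻¹) := by rw [h]
    _ = u * x⁻¹ := by field_simp

theorem stmt_18_general {S : Type*} [Semifield S] (hid : ∀ a : S, a + a = a)
    {n : ℕ}
    (A : Matrix (Fin n) (Fin n) S) (hA : ∀ i j, A i j ≠ 0)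
    (b : Fin n → S) (hb : ∀ i, b i ≠ 0)
    (hlow : ∀ i k : Fin n, k < i →
      A i k * (A k k)⁻¹ + b i * (b k)⁻¹ = b i * (b k)⁻¹)
    (hupp : ∀ i k : Fin n, i < k →
      A i k * (A k k)⁻¹ + b i * (b k)⁻¹ = b i * (b k)⁻¹) :
    ∀ k i : Fin n, b k * (A k k)⁻¹ + b i * (A i k)⁻¹ = b i * (A i k)⁻¹ := by
  intro k i
  rcases lt_trichotomy i k with hik | rfl | hki
  · exact add_mul_inv_eq_swap (hA i k) (hb k) (hupp i k hik)
  · exact hid _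
  · exact add_mul_inv_eq_swap (hA i k) (hb k) (hlow i k hki)

/-- Under the `LU`-type inequalities `a_{ik} ⊗ a_{kk}⁻¹ ≤ b_i ⊗ b_k⁻¹` (for
`k < i` and for `k > i`), the `k`-th column minimum of the matrix
`(b_i ⊗ a_{ij}⁻¹)` is attained at `i = k`, i.e. equals `b_k ⊗ a_{kk}⁻¹`.
The order is `a ≤ b ↔ a + b = b`. -/
theorem stmt_18 {S : Type*} [Semifield S] (hid : ∀ a : S, a + a = a)
    (htot : ∀ a b : S, a + b = b ∨ b + a = a) {n : ℕ}
    (A : Matrix (Fin n) (Fin n) S) (hA : ∀ i j, A i j ≠ 0)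
    (b : Fin n → S) (hb : ∀ i, b i ≠ 0)
    (hlow : ∀ i k : Fin n, k < i →
      A i k * (A k k)⁻¹ + b i * (b k)⁻¹ = b i * (b k)⁻¹)
    (hupp : ∀ i k : Fin n, i < k →
      A i k * (A k k)⁻¹ + b i * (b k)⁻¹ = b i * (b k)⁻¹) :
    ∀ k i : Fin n, b k * (A k k)⁻¹ + b i * (A i k)⁻¹ = b i * (A i k)⁻¹ :=
  stmt_18_general hid A hA b hb hlow hupp
end
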